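/- Let d ≥ 1, let K ⊆ [0,1]^d be convex, and let f : ℝ^d → ℝ be continuous DR-submodular and nonnegative on X = [0,1]^d, monotone on X (x ≤ y coordinatewise implies f(x) ≤ f(y)) with f(0) = 0, and differentiable on X with continuous bounded gradient ∇f. Define g : K → ℝ^d by g(x) = ∫_0^1 e^{z−1} · ∇f(z x) dz. Then for all x, y ∈ K: ⟨g(x), y − x⟩ ≥ (1 − 1/e) · f(y) − f(x). -/

import Mathlib

open MeasureTheory Finset

noncomputable section

/-- The unit cube `[0,1]^d` in `ℝ^d` (with Euclidean structure). -/
def cube (d : ℕ) : Set (EuclideanSpace ℝ (Fin d)) :=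
  {x | ∀ i, x i ∈ Set.Icc (0 : ℝ) 1}

/-- `f` is continuous DR-submodular on the unit cube `[0,1]^d`: for coordinatewise
comparable points `x ≤ y` in the cube and any feasible move of size `z ≥ 0` along a
coordinate direction, the gain at `x` dominates the gain at `y`. -/
def DRSubmodularOn (d : ℕ) (f : EuclideanSpace ℝ (Fin d) → ℝ) : Prop :=
  ∀ x y : EuclideanSpace ℝ (Fin d), x ∈ cube d → y ∈ cube d → (∀ i, x i ≤ y i) →
    ∀ (j : Fin d) (z : ℝ), 0 ≤ z →
      x + z • EuclideanSpace.single j (1 : ℝ) ∈ cube d →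
      y + z • EuclideanSpace.single j (1 : ℝ) ∈ cube d →
      f (y + z • EuclideanSpace.single j (1 : ℝ)) - f y ≤
        f (x + z • EuclideanSpace.single j (1 : ℝ)) - f x

/-!
Monotonicity of `f` makes `∇f ≥ 0` and DR-submodularity makes `∇f` coordinatewise antitone on
the cube. Hence, for `u ≤ v`, the mean value theorem gives `f v - f u ≤ ⟪∇f u, v - u⟫`, and
applying this to `v = u ⊔ y` yields `f y - f u ≤ ⟪∇f u, y⟫` for all `u, y` in the cube.
Taking `u = z x` and integrating against `e^{z-1}` on `[0,1]`, the terms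
`e^{z-1} (f(z x) + ⟪∇f(z x), x⟫)` integrate to `f x - e⁻¹ f 0 = f x`, leaving
`(1 - 1/e) f y - f x ≤ ⟪g x, y - x⟫`.
-/

open Real RealInnerProductSpace

local notation "𝐞" j:max => EuclideanSpace.single j (1 : ℝ)

section InnerProductSpace

variable {E : Type*} [NormedAddCommGroup E] [InnerProductSpace ℝ E] [CompleteSpace E]

theorem HasGradientWithinAt.comp_hasDerivWithinAt {f : E → ℝ} {g v : E} {s : Set E}
    {γ : ℝ → E} {S : Set ℝ} {t : ℝ} (hf : HasGradientWithinAt f g s (γ t))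
    (hγ : HasDerivWithinAt γ v S t) (hS : Set.MapsTo γ S s) :
    HasDerivWithinAt (fun t => f (γ t)) ⟪g, v⟫ S t := by
  simpa [Function.comp_def] using hf.hasFDerivWithinAt.comp_hasDerivWithinAt t hγ hS

theorem inner_intervalIntegral_left {φ : ℝ → E} {a b : ℝ}
    (hφ : IntervalIntegrable φ volume a b) (w : E) :
    ⟪∫ z in a..b, φ z, w⟫ = ∫ z in a..b, ⟪φ z, w⟫ := by
  simpa only [innerSL_apply_apply, real_inner_comm w] using
    ((innerSL ℝ w).intervalIntegral_comp_comm hφ).symm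

end InnerProductSpace

theorem accPt_zero_Icc {a b : ℝ} (ha : a ≤ 0) (hb : 0 ≤ b) (hab : a < b) :
    AccPt 0 (Filter.principal (Set.Icc a b)) :=
  (uniqueDiffOn_Icc hab 0 ⟨ha, hb⟩).accPt

theorem le_integral_exp_mul {F F' H : ℝ → ℝ} {c : ℝ}
    (hF : ∀ z ∈ Set.Icc (0 : ℝ) 1, HasDerivWithinAt F (F' z) (Set.Icc 0 1) z)
    (hF' : ContinuousOn F' (Set.Icc 0 1)) (hH : ContinuousOn H (Set.Icc 0 1))
    (hle : ∀ z ∈ Set.Icc (0 : ℝ) 1, c - F z - F' z ≤ H z) :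
    (1 - exp (-1)) * c - (F 1 - exp (-1) * F 0) ≤ ∫ z in (0 : ℝ)..1, exp (z - 1) * H z := by
  have hI : Set.uIcc (0 : ℝ) 1 = Set.Icc 0 1 := Set.uIcc_of_le zero_le_one
  have hexp : ∀ z, HasDerivAt (fun z => exp (z - 1)) (exp (z - 1)) z := fun z => by
    simpa using ((hasDerivAt_id z).sub_const 1).exp
  have hexpc : Continuous fun z : ℝ => exp (z - 1) := by fun_prop
  have hFc : ContinuousOn F (Set.Icc 0 1) := fun z hz => (hF z hz).continuousWithinAt
  have hparts : ∫ z in (0 : ℝ)..1, exp (z - 1) * F z + exp (z - 1) * F' z =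
      F 1 - exp (-1) * F 0 := by
    rw [intervalIntegral.integral_deriv_mul_eq_sub_of_hasDerivWithinAt
      (fun z _ => (hexp z).hasDerivWithinAt) (by rwa [hI])
      (hexpc.intervalIntegrable 0 1) ((hF'.intervalIntegrable_of_Icc zero_le_one))]
    norm_num
  have hmass : ∫ z in (0 : ℝ)..1, exp (z - 1) = 1 - exp (-1) := by
    rw [intervalIntegral.integral_comp_sub_right (fun z => exp z), integral_exp]
    norm_num
  calc (1 - exp (-1)) * c - (F 1 - exp (-1) * F 0)
      = ∫ z in (0 : ℝ)..1, exp (z - 1) * (c - F z - F' z) := by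
        rw [← hmass, ← hparts, ← intervalIntegral.integral_mul_const,
          ← intervalIntegral.integral_sub]
        · congr 1; ext z; ring
        · exact (hexpc.intervalIntegrable 0 1).mul_const c
        · exact ((hexpc.continuousOn.mul hFc).add (hexpc.continuousOn.mul hF')
            ).intervalIntegrable_of_Icc zero_le_one
    _ ≤ ∫ z in (0 : ℝ)..1, exp (z - 1) * H z := by
        refine intervalIntegral.integral_mono_on zero_le_one ?_ ?_
          fun z hz => mul_le_mul_of_nonneg_left (hle z hz) (exp_pos _).le
        · exact (hexpc.continuousOn.mul ((continuousOn_const.sub hFc).sub hF')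
            ).intervalIntegrable_of_Icc zero_le_one
        · exact (hexpc.continuousOn.mul hH).intervalIntegrable_of_Icc zero_le_one

section Cube

variable {d : ℕ}

theorem convex_cube : Convex ℝ (cube d) := by
  intro x hx y hy a b ha hb hab i
  obtain ⟨hx0, hx1⟩ := hx i
  obtain ⟨hy0, hy1⟩ := hy i
  simp only [PiLp.add_apply, PiLp.smul_apply, smul_eq_mul, Set.mem_Icc]
  constructor <;> nlinarith

theorem zero_mem_cube : (0 : EuclideanSpace ℝ (Fin d)) ∈ cube d := fun _ => by simp

theorem add_smul_single_mem_cube {x : EuclideanSpace ℝ (Fin d)} (hx : x ∈ cube d) {j : Fin d}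
    {t : ℝ} (ht : x j + t ∈ Set.Icc 0 1) : x + t • 𝐞 j ∈ cube d := by
  intro i
  by_cases hij : i = j
  · subst hij; simpa using ht
  · simpa [hij] using hx i

theorem add_smul_single_apply_le {x y : EuclideanSpace ℝ (Fin d)} (hxy : ∀ i, x i ≤ y i)
    {s t : ℝ} (hst : s ≤ t) (j i : Fin d) :
    (x + s • 𝐞 j) i ≤ (y + t • 𝐞 j) i := by
  by_cases hij : i = j
  · subst hij; simpa using add_le_add (hxy i) hst
  · simpa [hij] using hxy i

theorem inner_le_inner_of_apply_le {a b w : EuclideanSpace ℝ (Fin d)} (hab : ∀ i, a i ≤ b i)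
    (hw : ∀ i, 0 ≤ w i) : ⟪a, w⟫ ≤ ⟪b, w⟫ := by
  simp only [PiLp.inner_apply, RCLike.inner_apply, conj_trivial]
  exact Finset.sum_le_sum fun i _ => mul_le_mul_of_nonneg_left (hab i) (hw i)

end Cube

section Gradient

variable {d : ℕ} {f : EuclideanSpace ℝ (Fin d) → ℝ}
  {f' : EuclideanSpace ℝ (Fin d) → EuclideanSpace ℝ (Fin d)}

theorem hasDerivWithinAt_add_smul_single
    (hgrad : ∀ x ∈ cube d, HasGradientWithinAt f (f' x) (cube d) x)
    {x : EuclideanSpace ℝ (Fin d)} (hx : x ∈ cube d) {j : Fin d} {S : Set ℝ}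
    (hS : ∀ t ∈ S, x + t • 𝐞 j ∈ cube d) :
    HasDerivWithinAt (fun t => f (x + t • 𝐞 j)) (f' x j) S 0 := by
  have hγ : HasDerivWithinAt (fun t : ℝ => x + t • 𝐞 j) (𝐞 j) S 0 := by
    simpa using ((hasDerivAt_id (0 : ℝ)).smul_const (𝐞 j) |>.const_add x).hasDerivWithinAt
  have hx' : HasGradientWithinAt f (f' x) (cube d) (x + (0 : ℝ) • 𝐞 j) := by
    simpa using hgrad x hx
  simpa [EuclideanSpace.inner_single_right] using hx'.comp_hasDerivWithinAt hγ hS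

theorem gradient_apply_nonneg
    (hgrad : ∀ x ∈ cube d, HasGradientWithinAt f (f' x) (cube d) x)
    (hmono : ∀ x ∈ cube d, ∀ y ∈ cube d, (∀ i, x i ≤ y i) → f x ≤ f y)
    {x : EuclideanSpace ℝ (Fin d)} (hx : x ∈ cube d) (j : Fin d) : 0 ≤ f' x j := by
  have hS : ∀ t ∈ Set.Icc (-x j) (1 - x j), x + t • 𝐞 j ∈ cube d :=
    fun t ht => add_smul_single_mem_cube hx ⟨by linarith [ht.1], by linarith [ht.2]⟩
  refine (hasDerivWithinAt_add_smul_single hgrad hx hS).nonneg_of_monotoneOn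
    (accPt_zero_Icc (by linarith [(hx j).1]) (by linarith [(hx j).2]) (by linarith)) ?_
  intro s hs t ht hst
  exact hmono _ (hS s hs) _ (hS t ht) (add_smul_single_apply_le (fun _ => le_rfl) hst j)

theorem gradient_apply_antitone_of_sub_lt_one
    (hgrad : ∀ x ∈ cube d, HasGradientWithinAt f (f' x) (cube d) x) (hsub : DRSubmodularOn d f)
    {x y : EuclideanSpace ℝ (Fin d)} (hx : x ∈ cube d) (hy : y ∈ cube d) (hxy : ∀ i, x i ≤ y i)
    {j : Fin d} (hj : y j - x j < 1) : f' y j ≤ f' x j := by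
  have hSx : ∀ t ∈ Set.Icc (-x j) (1 - y j), x + t • 𝐞 j ∈ cube d :=
    fun t ht => add_smul_single_mem_cube hx ⟨by linarith [ht.1], by linarith [ht.2, hxy j]⟩
  have hSy : ∀ t ∈ Set.Icc (-x j) (1 - y j), y + t • 𝐞 j ∈ cube d :=
    fun t ht => add_smul_single_mem_cube hy ⟨by linarith [ht.1, hxy j], by linarith [ht.2]⟩
  -- DR-submodularity says exactly that `t ↦ f (x + t e) - f (y + t e)` is monotone.
  have hdiff : MonotoneOn (fun t => f (x + t • 𝐞 j) - f (y + t • 𝐞 j))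
      (Set.Icc (-x j) (1 - y j)) := by
    intro s hs t ht hst
    have hshift (z : EuclideanSpace ℝ (Fin d)) : z + s • 𝐞 j + (t - s) • 𝐞 j = z + t • 𝐞 j := by
      rw [add_assoc, ← add_smul, add_sub_cancel]
    have := hsub _ _ (hSx s hs) (hSy s hs) (add_smul_single_apply_le hxy le_rfl j) j (t - s)
      (sub_nonneg.2 hst) (by rw [hshift]; exact hSx t ht) (by rw [hshift]; exact hSy t ht)
    rw [hshift, hshift] at this
    linarith
  have := ((hasDerivWithinAt_add_smul_single hgrad hx hSx).sub
    (hasDerivWithinAt_add_smul_single hgrad hy hSy)).nonneg_of_monotoneOn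
    (accPt_zero_Icc (by linarith [(hx j).1]) (by linarith [(hy j).2]) (by linarith)) hdiff
  linarith

theorem gradient_apply_antitone
    (hgrad : ∀ x ∈ cube d, HasGradientWithinAt f (f' x) (cube d) x) (hsub : DRSubmodularOn d f)
    {x y : EuclideanSpace ℝ (Fin d)} (hx : x ∈ cube d) (hy : y ∈ cube d) (hxy : ∀ i, x i ≤ y i)
    (j : Fin d) : f' y j ≤ f' x j := by
  by_cases hj : y j - x j < 1
  · exact gradient_apply_antitone_of_sub_lt_one hgrad hsub hx hy hxy hj
  -- Otherwise `x j = 0` and `y j = 1`: no common shift of `x` and `y` along `𝐞 j` stays in the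
  -- cube, so we pass through the point `m` with `m j = 1/2`.
  have hx0 : x j = 0 := by linarith [(hx j).1, (hy j).2]
  have hy1 : y j = 1 := by linarith [(hx j).1, (hy j).2]
  set m := y + (-(1 / 2) : ℝ) • 𝐞 j
  have hmj : m j = 1 / 2 := by simp [m, hy1]; norm_num
  have hm : m ∈ cube d := add_smul_single_mem_cube hy ⟨by linarith, by linarith⟩
  have hxm : ∀ i, x i ≤ m i := fun i => by
    by_cases hij : i = j
    · subst hij; rw [hmj, hx0]; norm_num
    · simpa [m, hij] using hxy i
  have hmy : ∀ i, m i ≤ y i := fun i => by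
    by_cases hij : i = j
    · subst hij; rw [hmj, hy1]; norm_num
    · simp [m, hij]
  calc f' y j ≤ f' m j :=
        gradient_apply_antitone_of_sub_lt_one hgrad hsub hm hy hmy (by linarith)
    _ ≤ f' x j :=
        gradient_apply_antitone_of_sub_lt_one hgrad hsub hx hm hxm (by linarith)

theorem sub_le_inner_gradient_of_le
    (hgrad : ∀ x ∈ cube d, HasGradientWithinAt f (f' x) (cube d) x) (hsub : DRSubmodularOn d f)
    {u v : EuclideanSpace ℝ (Fin d)} (hu : u ∈ cube d) (hv : v ∈ cube d)
    (huv : ∀ i, u i ≤ v i) :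
    f v - f u ≤ ⟪f' u, v - u⟫ := by
  have hseg : Set.MapsTo (fun t : ℝ => u + t • (v - u)) (Set.Icc 0 1) (cube d) :=
    fun t ht => convex_cube.add_smul_sub_mem hu hv ht
  have hγ : ∀ t : ℝ, HasDerivAt (fun t : ℝ => u + t • (v - u)) (v - u) t := fun t => by
    simpa using ((hasDerivAt_id t).smul_const (v - u)).const_add u
  have hderiv : ∀ t ∈ Set.Icc (0 : ℝ) 1, HasDerivWithinAt (fun t => f (u + t • (v - u)))
      ⟪f' (u + t • (v - u)), v - u⟫ (Set.Icc 0 1) t := fun t ht =>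
    (hgrad _ (hseg ht)).comp_hasDerivWithinAt (hγ t).hasDerivWithinAt hseg
  obtain ⟨c, hc, hslope⟩ :=
    exists_hasDerivAt_eq_slope (fun t => f (u + t • (v - u))) _ one_pos
    (fun t ht => (hderiv t ht).continuousWithinAt)
    (fun t ht => (hderiv t (Set.Ioo_subset_Icc_self ht)).hasDerivAt (Icc_mem_nhds ht.1 ht.2))
  have hcu : ∀ i, u i ≤ (u + c • (v - u)) i := fun i => by
    simpa using mul_nonneg hc.1.le (sub_nonneg.2 (huv i))
  calc f v - f u = ⟪f' (u + c • (v - u)), v - u⟫ := by simpa using hslope.symm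
    _ ≤ ⟪f' u, v - u⟫ := inner_le_inner_of_apply_le
        (gradient_apply_antitone hgrad hsub hu (hseg (Set.Ioo_subset_Icc_self hc)) hcu)
        (fun i => by simpa using huv i)

theorem sub_le_inner_gradient
    (hgrad : ∀ x ∈ cube d, HasGradientWithinAt f (f' x) (cube d) x) (hsub : DRSubmodularOn d f)
    (hmono : ∀ x ∈ cube d, ∀ y ∈ cube d, (∀ i, x i ≤ y i) → f x ≤ f y)
    {u y : EuclideanSpace ℝ (Fin d)} (hu : u ∈ cube d) (hy : y ∈ cube d) :
    f y - f u ≤ ⟪f' u, y⟫ := by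
  set v : EuclideanSpace ℝ (Fin d) := WithLp.toLp 2 fun i => max (u i) (y i)
  have hv : v ∈ cube d := fun i =>
    ⟨le_max_of_le_left (hu i).1, max_le (hu i).2 (hy i).2⟩
  calc f y - f u ≤ f v - f u := by
        gcongr; exact hmono y hy v hv fun i => le_max_right (u i) (y i)
    _ ≤ ⟪f' u, v - u⟫ := sub_le_inner_gradient_of_le hgrad hsub hu hv fun i => le_max_left _ _
    _ ≤ ⟪f' u, y⟫ := by
        rw [real_inner_comm (v - u), real_inner_comm y]
        refine inner_le_inner_of_apply_le (fun i => ?_) (gradient_apply_nonneg hgrad hmono hu)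
        have : max (u i) (y i) ≤ y i + u i :=
          max_le (by linarith [(hy i).1]) (by linarith [(hu i).1])
        simp only [v, PiLp.sub_apply]
        linarith

end Gradient

theorem boosting_monotone_general
    (d : ℕ)
    (K : Set (EuclideanSpace ℝ (Fin d))) (hKX : K ⊆ cube d)
    (f : EuclideanSpace ℝ (Fin d) → ℝ)
    (f' : EuclideanSpace ℝ (Fin d) → EuclideanSpace ℝ (Fin d))
    (hsub : DRSubmodularOn d f)
    (hmono : ∀ x ∈ cube d, ∀ y ∈ cube d, (∀ i, x i ≤ y i) → f x ≤ f y)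
    (hzero : f 0 = 0)
    (hgrad : ∀ x ∈ cube d, HasGradientWithinAt f (f' x) (cube d) x)
    (hcont : ContinuousOn f' (cube d))
    (g : EuclideanSpace ℝ (Fin d) → EuclideanSpace ℝ (Fin d))
    (hg : ∀ x ∈ K, g x = ∫ z in (0:ℝ)..1, Real.exp (z - 1) • f' (z • x)) :
    ∀ x ∈ K, ∀ y ∈ K,
      (1 - 1 / Real.exp 1) * f y - f x ≤ (inner ℝ (g x) (y - x) : ℝ) := by
  intro x hx y hy
  have hseg : Set.MapsTo (fun z : ℝ => z • x) (Set.Icc 0 1) (cube d) := fun _ hz =>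
    convex_cube.smul_mem_of_zero_mem zero_mem_cube (hKX hx) hz
  have hf'c : ContinuousOn (fun z : ℝ => f' (z • x)) (Set.Icc 0 1) :=
    hcont.comp (by fun_prop) hseg
  have hderiv : ∀ z ∈ Set.Icc (0 : ℝ) 1,
      HasDerivWithinAt (fun z : ℝ => f (z • x)) ⟪f' (z • x), x⟫ (Set.Icc 0 1) z := fun z hz =>
    (hgrad _ (hseg hz)).comp_hasDerivWithinAt
      (by simpa using ((hasDerivAt_id z).smul_const x).hasDerivWithinAt) hseg
  calc (1 - 1 / exp 1) * f y - f x
      = (1 - exp (-1)) * f y - (f ((1 : ℝ) • x) - exp (-1) * f ((0 : ℝ) • x)) := by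
        simp [hzero, exp_neg]
    _ ≤ ∫ z in (0 : ℝ)..1, exp (z - 1) * ⟪f' (z • x), y - x⟫ := by
        refine le_integral_exp_mul hderiv (hf'c.inner continuousOn_const)
          (hf'c.inner continuousOn_const) fun z hz => ?_
        have := sub_le_inner_gradient hgrad hsub hmono (hseg hz) (hKX hy)
        rw [inner_sub_right]
        linarith
    _ = ⟪g x, y - x⟫ := by
        have hint : IntervalIntegrable (fun z : ℝ => exp (z - 1) • f' (z • x)) volume 0 1 :=
          (ContinuousOn.smul (f := fun z : ℝ => exp (z - 1)) (by fun_prop) hf'c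
            ).intervalIntegrable_of_Icc zero_le_one
        simp only [hg x hx, inner_intervalIntegral_left hint, real_inner_smul_left]

/-- Corollary 7 of Zhang et al., monotone boosting: for monotone,
nonnegative, continuous DR-submodular `f` with `f 0 = 0`, the auxiliary gradient
`g x = ∫_0^1 e^{z-1} ∇f(z x) dz` satisfies `⟨g x, y - x⟩ ≥ (1 - 1/e) f y - f x`
for all `x, y ∈ K`. -/
theorem boosting_monotone
    (d : ℕ) (hd : 1 ≤ d)
    (K : Set (EuclideanSpace ℝ (Fin d))) (hKcvx : Convex ℝ K) (hKX : K ⊆ cube d)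
    (f : EuclideanSpace ℝ (Fin d) → ℝ)
    (f' : EuclideanSpace ℝ (Fin d) → EuclideanSpace ℝ (Fin d))
    (hsub : DRSubmodularOn d f)
    (hnonneg : ∀ x ∈ cube d, 0 ≤ f x)
    (hmono : ∀ x ∈ cube d, ∀ y ∈ cube d, (∀ i, x i ≤ y i) → f x ≤ f y)
    (hzero : f 0 = 0)
    (hgrad : ∀ x ∈ cube d, HasGradientWithinAt f (f' x) (cube d) x)
    (hcont : ContinuousOn f' (cube d))
    (hbdd : ∃ G : ℝ, ∀ x ∈ cube d, ‖f' x‖ ≤ G)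
    (g : EuclideanSpace ℝ (Fin d) → EuclideanSpace ℝ (Fin d))
    (hg : ∀ x ∈ K, g x = ∫ z in (0:ℝ)..1, Real.exp (z - 1) • f' (z • x)) :
    ∀ x ∈ K, ∀ y ∈ K,
      (1 - 1 / Real.exp 1) * f y - f x ≤ (inner ℝ (g x) (y - x) : ℝ) :=
  boosting_monotone_general d K hKX f f' hsub hmono hzero hgrad hcont g hg
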